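/- Let q_0 ≠ 1 be a primitive l-th root of unity, and let a_1, a_2 be positive integers with l | a_1. If l does not divide a_2, then qbinom(a_1 + a_2 - 1, a_2)(q_0) = 0. If l | a_2, writing a_1 = l·a'_1 and a_2 = l·a'_2, then qbinom(a_1 + a_2 - 1, a_2)(q_0) equals the ordinary binomial coefficient C(a'_1 + a'_2 - 1, a'_2). -/
import Mathlib


open Polynomial

noncomputable section

/-- The `q`-integer `[n] = 1 + q + ⋯ + q^{n-1}` in `ℂ[q]`. -/
def qintC (n : ℕ) : Polynomial ℂ := ∑ k ∈ Finset.range n, X ^ k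

/-- The `q`-factorial `[n]!` in `ℂ[q]`. -/
def qfactC (n : ℕ) : Polynomial ℂ := ∏ k ∈ Finset.range n, qintC (k + 1)

/-- The Gaussian binomial coefficient `qbinom(n, p) = [n]!/([p]![n-p]!)`, which lies in
the polynomial ring: the quotient is exact, and is computed here by division by the
monic polynomial `[p]![n-p]!`. -/
def qbinomC (n p : ℕ) : Polynomial ℂ :=
  if p ≤ n then qfactC n /ₘ (qfactC p * qfactC (n - p)) else 0

end

noncomputable section

/-- recursive Gaussian binomial -/
def gb : ℕ → ℕ → Polynomial ℂ
  | _, 0 => 1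
  | 0, _ + 1 => 0
  | n + 1, p + 1 => gb n p + X ^ (p + 1) * gb n (p + 1)

end

open scoped Polynomial

lemma qintC_monic {n : ℕ} (hn : n ≠ 0) : (qintC n).Monic :=
  Polynomial.monic_geom_sum_X hn

lemma qfactC_monic (n : ℕ) : (qfactC n).Monic :=
  Polynomial.monic_prod_of_monic _ _ (fun k _ => qintC_monic k.succ_ne_zero)

lemma qintC_add (a b : ℕ) : qintC (a + b) = qintC a + X ^ a * qintC b := by
  induction b with
  | zero => simp [qintC]
  | succ b ih =>
    rw [← Nat.add_assoc]
    simp only [qintC, Finset.sum_range_succ] at *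
    rw [ih]; ring

lemma qfactC_succ (n : ℕ) : qfactC (n + 1) = qfactC n * qintC (n + 1) := by
  simp [qfactC, Finset.prod_range_succ]

lemma gb_eq_zero_of_lt : ∀ {n p : ℕ}, n < p → gb n p = 0
  | _, 0, h => absurd h (Nat.not_lt_zero _)
  | 0, _ + 1, _ => rfl
  | n + 1, p + 1, h => by
    rw [gb, gb_eq_zero_of_lt (Nat.lt_of_succ_lt_succ h),
      gb_eq_zero_of_lt (Nat.lt_of_succ_lt h), mul_zero, add_zero]

lemma gb_mul_eq : ∀ {n p : ℕ}, p ≤ n → gb n p * (qfactC p * qfactC (n - p)) = qfactC n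
  | n, 0, _ => by simp [gb, qfactC]
  | 0, p + 1, h => absurd h (Nat.not_succ_le_zero _)
  | n + 1, p + 1, h => by
    rcases Nat.lt_or_ge n (p + 1) with hn | hn
    · -- p + 1 = n + 1 i.e. p = n
      have hpn : p = n := by omega
      subst hpn
      rw [gb, gb_eq_zero_of_lt (Nat.lt_succ_self p), mul_zero, add_zero,
        Nat.succ_sub_succ, Nat.sub_self]
      have := gb_mul_eq (le_refl p)
      rw [Nat.sub_self] at this
      calc gb p p * (qfactC (p + 1) * qfactC 0)
          = (gb p p * (qfactC p * qfactC 0)) * qintC (p + 1) := by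
            rw [qfactC_succ]; ring
        _ = qfactC (p + 1) := by rw [this, qfactC_succ]
    · -- p + 1 ≤ n
      have h1 : gb n p * (qfactC p * qfactC (n - p)) = qfactC n := gb_mul_eq (Nat.le_of_succ_le hn)
      have h2 : gb n (p + 1) * (qfactC (p + 1) * qfactC (n - (p + 1))) = qfactC n := gb_mul_eq hn
      have hsub : n - p = (n - (p + 1)) + 1 := by omega
      have hq : qintC (n + 1) = qintC (p + 1) + X ^ (p + 1) * qintC (n - p) := by
        have : n + 1 = (p + 1) + (n - p) := by omega
        rw [this, qintC_add]
      rw [Nat.succ_sub_succ]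
      calc gb (n + 1) (p + 1) * (qfactC (p + 1) * qfactC (n - p))
          = gb n p * (qfactC p * qfactC (n - p)) * qintC (p + 1)
            + X ^ (p + 1) * (gb n (p + 1) * (qfactC (p + 1) * qfactC (n - (p + 1))))
              * qintC (n - p) := by
            rw [gb, hsub, qfactC_succ, qfactC_succ]; ring
        _ = qfactC n * (qintC (p + 1) + X ^ (p + 1) * qintC (n - p)) := by rw [h1, h2]; ring
        _ = qfactC (n + 1) := by rw [← hq, qfactC_succ]

lemma qbinomC_eq_gb {n p : ℕ} (h : p ≤ n) : qbinomC n p = gb n p := by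
  rw [qbinomC, if_pos h, ← gb_mul_eq h, mul_comm,
    Polynomial.mul_divByMonic_cancel_left _ ((qfactC_monic p).mul (qfactC_monic (n - p)))]

lemma qintC_mul (l k : ℕ) :
    qintC (l * k) = qintC l * (qintC k).comp (X ^ l) := by
  induction k with
  | zero => simp [qintC]
  | succ k ih =>
    have h1 : qintC (k + 1) = qintC k + X ^ k := by simp [qintC, Finset.sum_range_succ]
    rw [Nat.mul_succ, qintC_add, ih, h1, Polynomial.add_comp, Polynomial.pow_comp,
      Polynomial.X_comp, ← pow_mul, mul_comm l k]
    ring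

lemma qfactC_factor (l m : ℕ) (hl : 0 < l) :
    qfactC m = qintC l ^ (m / l) *
      ((∏ k ∈ Finset.range (m / l), (qintC (k + 1)).comp (X ^ l)) *
       ∏ j ∈ (Finset.range m).filter (fun j => ¬ l ∣ (j + 1)), qintC (j + 1)) := by
  have hsplit := Finset.prod_filter_mul_prod_filter_not (Finset.range m)
    (fun j => l ∣ (j + 1)) (fun j => qintC (j + 1))
  have hre : ∏ j ∈ (Finset.range m).filter (fun j => l ∣ (j + 1)), qintC (j + 1)
      = ∏ k ∈ Finset.range (m / l), qintC (l * (k + 1)) := by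
    refine (Finset.prod_nbij (fun k => l * (k + 1) - 1) ?_ ?_ ?_ ?_).symm
    · intro k hk
      simp only [Finset.mem_filter, Finset.mem_range] at hk ⊢
      have h1 : (k + 1) * l ≤ m := (Nat.le_div_iff_mul_le hl).mp hk
      have h2 : l * (k + 1) = (k + 1) * l := Nat.mul_comm _ _
      have h3 : 1 ≤ l * (k + 1) := Nat.mul_pos hl k.succ_pos
      exact ⟨by omega, ⟨k + 1, by omega⟩⟩
    · intro x _ y _ hxy
      simp only at hxy
      have hx1 : 1 ≤ l * (x + 1) := Nat.mul_pos hl x.succ_pos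
      have hy1 : 1 ≤ l * (y + 1) := Nat.mul_pos hl y.succ_pos
      have : l * (x + 1) = l * (y + 1) := by omega
      have := Nat.eq_of_mul_eq_mul_left hl this
      omega
    · intro j hj
      simp only [Finset.coe_filter, Finset.mem_range, Set.mem_setOf_eq] at hj
      obtain ⟨hjm, t, ht⟩ := hj
      have ht1 : 1 ≤ t := by nlinarith
      refine ⟨t - 1, ?_, ?_⟩
      · simp only [Finset.coe_range, Set.mem_Iio]
        have hc : t * l = l * t := Nat.mul_comm _ _
        have h1 : t * l ≤ m := by omega
        have h2 := (Nat.le_div_iff_mul_le hl).mpr h1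
        omega
      · simp only
        have h3 : t - 1 + 1 = t := by omega
        rw [h3]
        omega
    · intro k _
      congr 1
      have : 1 ≤ l * (k + 1) := Nat.mul_pos hl k.succ_pos
      omega
  calc qfactC m = (∏ j ∈ (Finset.range m).filter (fun j => l ∣ (j + 1)), qintC (j + 1)) *
        ∏ j ∈ (Finset.range m).filter (fun j => ¬ l ∣ (j + 1)), qintC (j + 1) := by
        rw [hsplit]; rfl
    _ = _ := by
        rw [hre]
        simp_rw [qintC_mul l]
        rw [Finset.prod_mul_distrib, Finset.prod_const, Finset.card_range, mul_assoc]

section Eval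

variable {l : ℕ} {q₀ : ℂ}

lemma eval_qintC (m : ℕ) : (qintC m).eval q₀ = ∑ k ∈ Finset.range m, q₀ ^ k := by
  simp [qintC]

lemma eval_qintC_root (hq₀ : q₀ ≠ 1) (hprim : IsPrimitiveRoot q₀ l) :
    (qintC l).eval q₀ = 0 := by
  rw [eval_qintC, geom_sum_eq hq₀, hprim.pow_eq_one, sub_self, zero_div]

lemma eval_qintC_ne_zero (hq₀ : q₀ ≠ 1) (hprim : IsPrimitiveRoot q₀ l)
    {m : ℕ} (hm : ¬ l ∣ m) : (qintC m).eval q₀ ≠ 0 := by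
  rw [eval_qintC, geom_sum_eq hq₀]
  have h1 : q₀ ^ m ≠ 1 := fun h => hm (hprim.dvd_of_pow_eq_one m h)
  exact div_ne_zero (sub_ne_zero.mpr h1) (sub_ne_zero.mpr hq₀)

lemma eval_qintC_comp (hprim : IsPrimitiveRoot q₀ l) (k : ℕ) :
    ((qintC k).comp (X ^ l)).eval q₀ = (k : ℂ) := by
  rw [Polynomial.eval_comp, Polynomial.eval_pow, Polynomial.eval_X, hprim.pow_eq_one]
  simp [qintC]

lemma eval_qintC_add_mul (hq₀ : q₀ ≠ 1) (hprim : IsPrimitiveRoot q₀ l) (i k : ℕ) :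
    (qintC (i + l * k)).eval q₀ = (qintC i).eval q₀ := by
  induction k with
  | zero => simp
  | succ k ih =>
    have : i + l * (k + 1) = (i + l * k) + l := by ring
    rw [this, qintC_add, Polynomial.eval_add, Polynomial.eval_mul,
      eval_qintC_root hq₀ hprim, mul_zero, add_zero, ih]

end Eval

noncomputable def Eprod (l : ℕ) (q₀ : ℂ) (m : ℕ) : ℂ :=
  ∏ j ∈ (Finset.range m).filter (fun j => ¬ l ∣ (j + 1)), (qintC (j + 1)).eval q₀

section EprodL

variable {l : ℕ} {q₀ : ℂ}

lemma Eprod_succ (n : ℕ) : Eprod l q₀ (n + 1) =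
    Eprod l q₀ n * (if l ∣ (n + 1) then 1 else (qintC (n + 1)).eval q₀) := by
  rw [Eprod, Finset.range_add_one, Finset.filter_insert]
  by_cases h : l ∣ (n + 1)
  · rw [if_pos h, if_neg (by simpa using h), mul_one]; rfl
  · rw [if_neg h, if_pos (by simpa using h), Finset.prod_insert (by simp), mul_comm]; rfl

lemma Eprod_add (hq₀ : q₀ ≠ 1) (hprim : IsPrimitiveRoot q₀ l)
    {m : ℕ} (hm : l ∣ m) (i : ℕ) :
    Eprod l q₀ (m + i) = Eprod l q₀ m * Eprod l q₀ i := by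
  induction i with
  | zero => simp [Eprod]
  | succ i ih =>
    obtain ⟨k, hk⟩ := id hm
    have h1 : m + (i + 1) = (m + i) + 1 := by ring
    have h2 : l ∣ (m + i + 1) ↔ l ∣ (i + 1) := by
      have : m + i + 1 = m + (i + 1) := by ring
      rw [this, Nat.dvd_add_right hm]
    have h3 : (qintC (m + i + 1)).eval q₀ = (qintC (i + 1)).eval q₀ := by
      have : m + i + 1 = (i + 1) + l * k := by omega
      rw [this, eval_qintC_add_mul hq₀ hprim]
    rw [h1, Eprod_succ, ih, Eprod_succ]
    by_cases h : l ∣ (i + 1)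
    · rw [if_pos h, if_pos (h2.mpr h), mul_assoc]
    · rw [if_neg h, if_neg (fun hh => h (h2.mp hh)), h3, mul_assoc]

lemma Eprod_mul (hq₀ : q₀ ≠ 1) (hprim : IsPrimitiveRoot q₀ l) (M : ℕ) :
    Eprod l q₀ (l * M) = (Eprod l q₀ l) ^ M := by
  induction M with
  | zero => simp [Eprod]
  | succ M ih =>
    have : l * (M + 1) = l * M + l := by ring
    rw [this, Eprod_add hq₀ hprim ⟨M, rfl⟩ l, ih, pow_succ]

lemma Eprod_pred (hl : 0 < l) (M : ℕ) (hM : 0 < M) :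
    Eprod l q₀ (l * M - 1) = Eprod l q₀ (l * M) := by
  have h1 : 1 ≤ l * M := Nat.mul_pos hl hM
  have h2 : l * M = (l * M - 1) + 1 := by omega
  have h3 := Eprod_succ (l := l) (q₀ := q₀) (l * M - 1)
  rw [← h2, if_pos ⟨M, rfl⟩, mul_one] at h3
  exact h3.symm

lemma Eprod_ne_zero (hq₀ : q₀ ≠ 1) (hprim : IsPrimitiveRoot q₀ l) (m : ℕ) :
    Eprod l q₀ m ≠ 0 := by
  refine Finset.prod_ne_zero_iff.mpr ?_
  intro j hj
  simp only [Finset.mem_filter] at hj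
  exact eval_qintC_ne_zero hq₀ hprim hj.2

end EprodL

section Main

variable {l : ℕ} {q₀ : ℂ}

lemma eval_comp_prod (hprim : IsPrimitiveRoot q₀ l) (t : ℕ) :
    (∏ k ∈ Finset.range t, (qintC (k + 1)).comp (X ^ l)).eval q₀
      = (Nat.factorial t : ℂ) := by
  rw [Polynomial.eval_prod]
  have h : ∀ k ∈ Finset.range t, ((qintC (k + 1)).comp (X ^ l)).eval q₀ = ((k + 1 : ℕ) : ℂ) :=
    fun k _ => by exact_mod_cast eval_qintC_comp hprim (k + 1)
  rw [Finset.prod_congr rfl h, ← Nat.cast_prod, Finset.prod_range_add_one_eq_factorial]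

lemma eval_filter_prod (m : ℕ) :
    (∏ j ∈ (Finset.range m).filter (fun j => ¬ l ∣ (j + 1)), qintC (j + 1)).eval q₀
      = Eprod l q₀ m := by
  rw [Polynomial.eval_prod]; rfl

end Main


/-- Let `q₀ ≠ 1` be a primitive `l`-th root of unity and `a₁, a₂` positive integers with
`l ∣ a₁`. If `l ∤ a₂` then `qbinom(a₁ + a₂ - 1, a₂)(q₀) = 0`; if `l ∣ a₂`, writing
`a₁ = l·a₁'` and `a₂ = l·a₂'`, then `qbinom(a₁ + a₂ - 1, a₂)(q₀)` equals the ordinary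
binomial coefficient `C(a₁' + a₂' - 1, a₂')`. -/
theorem eval_qbinom_at_root_of_unity
    (l : ℕ) (q₀ : ℂ) (hq₀ : q₀ ≠ 1) (hprim : IsPrimitiveRoot q₀ l)
    (a₁ a₂ : ℕ) (h₁ : 0 < a₁) (h₂ : 0 < a₂) (hl : l ∣ a₁) :
    (¬ l ∣ a₂ → (qbinomC (a₁ + a₂ - 1) a₂).eval q₀ = 0) ∧
      (∀ a₁' a₂', a₁ = l * a₁' → a₂ = l * a₂' →
        (qbinomC (a₁ + a₂ - 1) a₂).eval q₀ = (Nat.choose (a₁' + a₂' - 1) a₂' : ℂ)) := by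
  have hl0 : 0 < l := Nat.pos_of_dvd_of_pos hl h₁
  have hlne : l ≠ 0 := hl0.ne'
  have hl1 : l ≠ 1 := by
    rintro rfl
    exact hq₀ (by simpa using hprim.pow_eq_one)
  set N := a₁ + a₂ - 1 with hN
  have ha2N : a₂ ≤ N := by omega
  have hNa2 : N - a₂ = a₁ - 1 := by omega
  have key : gb N a₂ * (qfactC a₂ * qfactC (a₁ - 1)) = qfactC N := by
    rw [← hNa2]; exact gb_mul_eq ha2N
  obtain ⟨c₁, hc₁⟩ := hl
  have hc₁pos : 0 < c₁ := by
    rcases Nat.eq_zero_or_pos c₁ with h | h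
    · subst h; simp at hc₁; omega
    · exact h
  have hmulpred : l * (c₁ - 1) + l = l * c₁ := by
    rw [← Nat.mul_succ]; congr 1; omega
  have hd3 : (a₁ - 1) / l = c₁ - 1 := by
    have he : a₁ - 1 = l * (c₁ - 1) + (l - 1) := by omega
    rw [he, Nat.mul_add_div hl0, Nat.div_eq_of_lt (by omega), Nat.add_zero]
  -- abbreviations for the three factorizations
  have h2 := qfactC_factor l a₂ hl0
  have h3 := qfactC_factor l (a₁ - 1) hl0
  have h1 := qfactC_factor l N hl0
  set C2 := ∏ k ∈ Finset.range (a₂ / l), (qintC (k + 1)).comp (X ^ l) with hC2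
  set C3 := ∏ k ∈ Finset.range ((a₁ - 1) / l), (qintC (k + 1)).comp (X ^ l) with hC3
  set C1 := ∏ k ∈ Finset.range (N / l), (qintC (k + 1)).comp (X ^ l) with hC1
  set R2 := ∏ j ∈ (Finset.range a₂).filter (fun j => ¬ l ∣ (j + 1)), qintC (j + 1) with hR2
  set R3 := ∏ j ∈ (Finset.range (a₁ - 1)).filter (fun j => ¬ l ∣ (j + 1)), qintC (j + 1) with hR3
  set R1 := ∏ j ∈ (Finset.range N).filter (fun j => ¬ l ∣ (j + 1)), qintC (j + 1) with hR1
  have hqlne : (qintC l : Polynomial ℂ) ≠ 0 := (qintC_monic hlne).ne_zero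
  have hCR2 : (C2 * R2).eval q₀ = (Nat.factorial (a₂ / l) : ℂ) * Eprod l q₀ a₂ := by
    rw [Polynomial.eval_mul, hC2, eval_comp_prod hprim, hR2, eval_filter_prod]
  have hCR3 : (C3 * R3).eval q₀
      = (Nat.factorial ((a₁ - 1) / l) : ℂ) * Eprod l q₀ (a₁ - 1) := by
    rw [Polynomial.eval_mul, hC3, eval_comp_prod hprim, hR3, eval_filter_prod]
  have hCR1 : (C1 * R1).eval q₀ = (Nat.factorial (N / l) : ℂ) * Eprod l q₀ N := by
    rw [Polynomial.eval_mul, hC1, eval_comp_prod hprim, hR1, eval_filter_prod]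
  have hCR2ne : (C2 * R2).eval q₀ ≠ 0 := by
    rw [hCR2]
    exact mul_ne_zero (Nat.cast_ne_zero.mpr (Nat.factorial_ne_zero _))
      (Eprod_ne_zero hq₀ hprim _)
  have hCR3ne : (C3 * R3).eval q₀ ≠ 0 := by
    rw [hCR3]
    exact mul_ne_zero (Nat.cast_ne_zero.mpr (Nat.factorial_ne_zero _))
      (Eprod_ne_zero hq₀ hprim _)
  have hgbq : (qbinomC N a₂).eval q₀ = (gb N a₂).eval q₀ := by
    rw [qbinomC_eq_gb ha2N]
  have hmlt : a₂ % l < l := Nat.mod_lt _ hl0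
  have hdm := Nat.div_add_mod a₂ l
  constructor
  · -- Case 1 : ¬ l ∣ a₂
    intro hnd
    have hr1 : 1 ≤ a₂ % l := by
      rcases Nat.eq_zero_or_pos (a₂ % l) with h | h
      · exact absurd (Nat.dvd_of_mod_eq_zero h) hnd
      · exact h
    have hdN : N / l = c₁ + a₂ / l := by
      have hma : l * (c₁ + a₂ / l) = l * c₁ + l * (a₂ / l) := by ring
      have he : N = l * (c₁ + a₂ / l) + (a₂ % l - 1) := by omega
      rw [he, Nat.mul_add_div hl0,
        Nat.div_eq_of_lt (lt_of_le_of_lt (Nat.sub_le _ _) hmlt), Nat.add_zero]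
    have hpow : qintC l ^ (N / l) = qintC l * qintC l ^ (a₂ / l + (c₁ - 1)) := by
      rw [← pow_succ']
      congr 1
      omega
    have keq : (gb N a₂ * ((C2 * R2) * (C3 * R3))) * qintC l ^ (a₂ / l + (c₁ - 1))
        = (qintC l * (C1 * R1)) * qintC l ^ (a₂ / l + (c₁ - 1)) := by
      calc (gb N a₂ * ((C2 * R2) * (C3 * R3))) * qintC l ^ (a₂ / l + (c₁ - 1))
          = gb N a₂ * ((qintC l ^ (a₂ / l) * (C2 * R2)) *
              (qintC l ^ ((a₁ - 1) / l) * (C3 * R3))) := by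
            rw [hd3, pow_add]; ring
        _ = gb N a₂ * (qfactC a₂ * qfactC (a₁ - 1)) := by rw [← h2, ← h3]
        _ = qfactC N := key
        _ = qintC l ^ (N / l) * (C1 * R1) := h1
        _ = _ := by rw [hpow]; ring
    have hg := mul_right_cancel₀ (pow_ne_zero _ hqlne) keq
    have h := congrArg (Polynomial.eval q₀) hg
    simp only [Polynomial.eval_mul, eval_qintC_root hq₀ hprim, zero_mul] at h
    rw [hgbq]
    have hne : Polynomial.eval q₀ C2 * Polynomial.eval q₀ R2 *
        (Polynomial.eval q₀ C3 * Polynomial.eval q₀ R3) ≠ 0 := by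
      rw [Polynomial.eval_mul] at hCR2ne hCR3ne
      exact mul_ne_zero hCR2ne hCR3ne
    rcases mul_eq_zero.mp h with h' | h'
    · exact h'
    · exact absurd h' hne
  · -- Case 2 : l ∣ a₂
    rintro b₁ b₂ hb₁ hb₂
    have hb₁c : b₁ = c₁ := by
      have := hc₁.symm.trans hb₁
      exact (Nat.eq_of_mul_eq_mul_left hl0 this).symm
    subst hb₁c
    have hb₂pos : 0 < b₂ := by
      rcases Nat.eq_zero_or_pos b₂ with h | h
      · subst h; simp at hb₂; omega
      · exact h
    have hd2 : a₂ / l = b₂ := by rw [hb₂, Nat.mul_div_cancel_left _ hl0]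
    set M := b₁ + b₂ with hM
    have hMpos : 0 < M := by omega
    have hNM : N = l * M - 1 := by
      have : l * M = l * b₁ + l * b₂ := by ring
      omega
    have hdN : N / l = M - 1 := by
      have h1' : l * (M - 1) + l = l * M := by rw [← Nat.mul_succ]; congr 1; omega
      have hlM : 1 ≤ l * M := Nat.mul_pos hl0 hMpos
      have he : N = l * (M - 1) + (l - 1) := by omega
      rw [he, Nat.mul_add_div hl0, Nat.div_eq_of_lt (by omega), Nat.add_zero]
    have hexp : N / l = a₂ / l + (a₁ - 1) / l := by
      rw [hdN, hd2, hd3]; omega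
    have keq : (gb N a₂ * ((C2 * R2) * (C3 * R3))) * qintC l ^ (N / l)
        = (C1 * R1) * qintC l ^ (N / l) := by
      calc (gb N a₂ * ((C2 * R2) * (C3 * R3))) * qintC l ^ (N / l)
          = gb N a₂ * ((qintC l ^ (a₂ / l) * (C2 * R2)) *
              (qintC l ^ ((a₁ - 1) / l) * (C3 * R3))) := by
            rw [hexp, pow_add]; ring
        _ = gb N a₂ * (qfactC a₂ * qfactC (a₁ - 1)) := by rw [← h2, ← h3]
        _ = qfactC N := key
        _ = _ := by rw [h1]; ring
    have hg := mul_right_cancel₀ (pow_ne_zero _ hqlne) keq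
    have heval : (gb N a₂).eval q₀ * ((C2 * R2).eval q₀ * (C3 * R3).eval q₀)
        = (C1 * R1).eval q₀ := by
      have h := congrArg (Polynomial.eval q₀) hg
      rw [Polynomial.eval_mul, Polynomial.eval_mul] at h
      exact h
    -- compute the Eprods
    set P := Eprod l q₀ l with hP
    have hPne : P ≠ 0 := Eprod_ne_zero hq₀ hprim _
    have hE2 : Eprod l q₀ a₂ = P ^ b₂ := by rw [hb₂, Eprod_mul hq₀ hprim]
    have hE3 : Eprod l q₀ (a₁ - 1) = P ^ b₁ := by
      have : a₁ - 1 = l * b₁ - 1 := by omega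
      rw [this, Eprod_pred hl0 _ hc₁pos, Eprod_mul hq₀ hprim]
    have hE1 : Eprod l q₀ N = P ^ M := by
      rw [hNM, Eprod_pred hl0 _ hMpos, Eprod_mul hq₀ hprim]
    rw [hCR2, hCR3, hCR1, hE2, hE3, hE1, hd2, hd3, hdN] at heval
    have hMb : b₂ ≤ M - 1 := by omega
    have hchoose := Nat.choose_mul_factorial_mul_factorial hMb
    have hsub : M - 1 - b₂ = b₁ - 1 := by omega
    rw [hsub] at hchoose
    have hgoal : (gb N a₂).eval q₀ * ((Nat.factorial b₂ : ℂ) * (Nat.factorial (b₁ - 1) : ℂ))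
        = ((M - 1).choose b₂ : ℂ) * ((Nat.factorial b₂ : ℂ) * (Nat.factorial (b₁ - 1) : ℂ)) := by
      have hPM : (P ^ b₂) * (P ^ b₁) = P ^ M := by rw [← pow_add]; congr 1; omega
      have hfc : ((M - 1).choose b₂ : ℂ) * (Nat.factorial b₂ : ℂ) * (Nat.factorial (b₁ - 1) : ℂ)
          = (Nat.factorial (M - 1) : ℂ) := by exact_mod_cast congrArg (Nat.cast : ℕ → ℂ) hchoose
      have hPMne : P ^ M ≠ 0 := pow_ne_zero _ hPne
      have key2 : ((gb N a₂).eval q₀ * ((Nat.factorial b₂ : ℂ) * (Nat.factorial (b₁ - 1) : ℂ)))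
          * P ^ M = (((M - 1).choose b₂ : ℂ) * ((Nat.factorial b₂ : ℂ)
            * (Nat.factorial (b₁ - 1) : ℂ))) * P ^ M := by
        calc ((gb N a₂).eval q₀ * ((Nat.factorial b₂ : ℂ) * (Nat.factorial (b₁ - 1) : ℂ))) * P ^ M
            = (gb N a₂).eval q₀ * ((Nat.factorial b₂ : ℂ) * P ^ b₂
                * ((Nat.factorial (b₁ - 1) : ℂ) * P ^ b₁)) := by rw [← hPM]; ring
          _ = (Nat.factorial (M - 1) : ℂ) * P ^ M := heval
          _ = _ := by rw [← hfc]; ring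
      exact mul_right_cancel₀ hPMne key2
    have hfne : ((Nat.factorial b₂ : ℂ) * (Nat.factorial (b₁ - 1) : ℂ)) ≠ 0 :=
      mul_ne_zero (Nat.cast_ne_zero.mpr (Nat.factorial_ne_zero _))
        (Nat.cast_ne_zero.mpr (Nat.factorial_ne_zero _))
    have := mul_right_cancel₀ hfne hgoal
    rw [hgbq, this]
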